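/- Let N ≥ 1 and let u : ℝ × ℝ → ℝ, U : ℝ × ℝ → ℝ^N be smooth solutions of the Jordan mKdV system u_t = u_{xxx} - 6u²u_x + 6u_x⟨U,U⟩ + 12u⟨U,U_x⟩ and U_t = U_{xxx} - 12uu_x U - 6u²U_x + 6⟨U,U⟩U_x. Define w := u_x - u² + ⟨U,U⟩ and W := U_x - 2uU. Then w_t = w_{xxx} + 3(w² - ⟨W,W⟩)_x and W_t = W_{xxx} + 6(wW)_x. -/

import Mathlib

noncomputable section

/-- partial derivative in the first (space) variable -/
def pdx (f : ℝ → ℝ → ℝ) : ℝ → ℝ → ℝ := fun x t => deriv (fun y => f y t) x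

/-- partial derivative in the second (time) variable -/
def pdt (f : ℝ → ℝ → ℝ) : ℝ → ℝ → ℝ := fun x t => deriv (fun s => f x s) t

/-- smoothness of a function of two real variables -/
def smooth2 (f : ℝ → ℝ → ℝ) : Prop := ContDiff ℝ (⊤ : ℕ∞) (fun p : ℝ × ℝ => f p.1 p.2)

/-- componentwise partial x-derivative of a vector-valued function -/
def pdxV {N : ℕ} (U : ℝ → ℝ → Fin N → ℝ) : ℝ → ℝ → Fin N → ℝ :=
  fun x t i => deriv (fun y => U y t i) x

/-- componentwise partial t-derivative of a vector-valued function -/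
def pdtV {N : ℕ} (U : ℝ → ℝ → Fin N → ℝ) : ℝ → ℝ → Fin N → ℝ :=
  fun x t i => deriv (fun s => U x s i) t

/-- pointwise Euclidean inner product of two vector-valued functions -/
def ip {N : ℕ} (A B : ℝ → ℝ → Fin N → ℝ) : ℝ → ℝ → ℝ :=
  fun x t => ∑ i, A x t i * B x t i

/-- componentwise smoothness of a vector-valued function of two real variables -/
def smooth2V {N : ℕ} (U : ℝ → ℝ → Fin N → ℝ) : Prop :=
  ∀ i, ContDiff ℝ (⊤ : ℕ∞) (fun p : ℝ × ℝ => U p.1 p.2 i)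

/- ### Auxiliary lemmas -/

theorem smooth2_sliceX {f : ℝ → ℝ → ℝ} (hf : smooth2 f) (t : ℝ) :
    ContDiff ℝ (⊤ : ℕ∞) (fun y => f y t) := hf.comp (contDiff_id.prodMk contDiff_const)

theorem smooth2_sliceT {f : ℝ → ℝ → ℝ} (hf : smooth2 f) (x : ℝ) :
    ContDiff ℝ (⊤ : ℕ∞) (fun s => f x s) := hf.comp (contDiff_const.prodMk contDiff_id)

theorem smooth2_hasDerivX {f : ℝ → ℝ → ℝ} (hf : smooth2 f) (x t : ℝ) :
    HasDerivAt (fun y => f y t) (pdx f x t) x :=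
  ((smooth2_sliceX hf t).differentiable (by simp) x).hasDerivAt

theorem smooth2_hasDerivT {f : ℝ → ℝ → ℝ} (hf : smooth2 f) (x t : ℝ) :
    HasDerivAt (fun s => f x s) (pdt f x t) t :=
  ((smooth2_sliceT hf x).differentiable (by simp) t).hasDerivAt

theorem pdx_eq_fderiv {f : ℝ → ℝ → ℝ} (hf : smooth2 f) (x t : ℝ) :
    pdx f x t = fderiv ℝ (fun p : ℝ × ℝ => f p.1 p.2) (x, t) (1, 0) := by
  have h1 : HasDerivAt (fun y : ℝ => (y, t)) ((1 : ℝ), (0 : ℝ)) x :=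
    (hasDerivAt_id x).prodMk (hasDerivAt_const x t)
  have h2 := (hf.differentiable (by simp) (x, t)).hasFDerivAt
  exact (h2.comp_hasDerivAt x h1).deriv

theorem pdt_eq_fderiv {f : ℝ → ℝ → ℝ} (hf : smooth2 f) (x t : ℝ) :
    pdt f x t = fderiv ℝ (fun p : ℝ × ℝ => f p.1 p.2) (x, t) (0, 1) := by
  have h1 : HasDerivAt (fun s : ℝ => (x, s)) ((0 : ℝ), (1 : ℝ)) t :=
    (hasDerivAt_const t x).prodMk (hasDerivAt_id t)
  have h2 := (hf.differentiable (by simp) (x, t)).hasFDerivAt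
  exact (h2.comp_hasDerivAt t h1).deriv

theorem smooth2_pdx {f : ℝ → ℝ → ℝ} (hf : smooth2 f) : smooth2 (pdx f) := by
  have h : (fun p : ℝ × ℝ => pdx f p.1 p.2)
      = fun p : ℝ × ℝ => (fderiv ℝ (fun p : ℝ × ℝ => f p.1 p.2) p) (1, 0) := by
    funext p
    exact pdx_eq_fderiv hf p.1 p.2
  rw [smooth2, h]
  exact (ContinuousLinearMap.apply ℝ ℝ ((1 : ℝ), (0 : ℝ))).contDiff.comp
    (hf.fderiv_right (by simp))

theorem clairaut {f : ℝ → ℝ → ℝ} (hf : smooth2 f) (x t : ℝ) :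
    pdt (pdx f) x t = pdx (pdt f) x t := by
  set F : ℝ × ℝ → ℝ := fun p => f p.1 p.2 with hF
  set G : ℝ × ℝ → (ℝ × ℝ →L[ℝ] ℝ) := fderiv ℝ F with hG
  have hGsmooth : ContDiff ℝ (⊤ : ℕ∞) G := hf.fderiv_right (by simp)
  have hGdiff : DifferentiableAt ℝ G (x, t) := hGsmooth.differentiable (by simp) (x, t)
  have symm : ∀ v w : ℝ × ℝ, fderiv ℝ G (x, t) v w = fderiv ℝ G (x, t) w v := by
    intro v w
    exact second_derivative_symmetric (f := F) (f' := G)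
      (fun y => (hf.differentiable (by simp) y).hasFDerivAt) hGdiff.hasFDerivAt v w
  have hpx : pdx f = fun a b => G (a, b) (1, 0) := by
    funext a b; exact pdx_eq_fderiv hf a b
  have hpt : pdt f = fun a b => G (a, b) (0, 1) := by
    funext a b; exact pdt_eq_fderiv hf a b
  have e1 : pdt (pdx f) x t = fderiv ℝ G (x, t) (0, 1) (1, 0) := by
    rw [hpx]
    show deriv (fun s => G (x, s) (1, 0)) t = _
    have h1 : HasDerivAt (fun s : ℝ => (x, s)) ((0 : ℝ), (1 : ℝ)) t :=
      (hasDerivAt_const t x).prodMk (hasDerivAt_id t)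
    have h2 : HasFDerivAt (fun p : ℝ × ℝ => G p (1, 0))
        ((ContinuousLinearMap.apply ℝ ℝ ((1 : ℝ), (0 : ℝ))).comp (fderiv ℝ G (x, t))) (x, t) :=
      (ContinuousLinearMap.apply ℝ ℝ ((1 : ℝ), (0 : ℝ))).hasFDerivAt.comp (x, t)
        hGdiff.hasFDerivAt
    exact (h2.comp_hasDerivAt t h1).deriv
  have e2 : pdx (pdt f) x t = fderiv ℝ G (x, t) (1, 0) (0, 1) := by
    rw [hpt]
    show deriv (fun y => G (y, t) (0, 1)) x = _
    have h1 : HasDerivAt (fun y : ℝ => (y, t)) ((1 : ℝ), (0 : ℝ)) x :=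
      (hasDerivAt_id x).prodMk (hasDerivAt_const x t)
    have h2 : HasFDerivAt (fun p : ℝ × ℝ => G p (0, 1))
        ((ContinuousLinearMap.apply ℝ ℝ ((0 : ℝ), (1 : ℝ))).comp (fderiv ℝ G (x, t))) (x, t) :=
      (ContinuousLinearMap.apply ℝ ℝ ((0 : ℝ), (1 : ℝ))).hasFDerivAt.comp (x, t)
        hGdiff.hasFDerivAt
    exact (h2.comp_hasDerivAt x h1).deriv
  rw [e1, e2, symm]

theorem ip_comm {N : ℕ} (A B : ℝ → ℝ → Fin N → ℝ) : ip A B = ip B A := by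
  funext x t
  exact Finset.sum_congr rfl fun i _ => mul_comm _ _

theorem hasDerivX_ip {N : ℕ} {A B : ℝ → ℝ → Fin N → ℝ}
    (hA : smooth2V A) (hB : smooth2V B) (x t : ℝ) :
    HasDerivAt (fun y => ip A B y t) (ip (pdxV A) B x t + ip A (pdxV B) x t) x := by
  have h : HasDerivAt (fun y => ∑ i : Fin N, A y t i * B y t i)
      (∑ i : Fin N, (pdxV A x t i * B x t i + A x t i * pdxV B x t i)) x :=
    HasDerivAt.fun_sum fun i _ =>
      (smooth2_hasDerivX (f := fun a b => A a b i) (hA i) x t).mul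
        (smooth2_hasDerivX (f := fun a b => B a b i) (hB i) x t)
  have e : (∑ i : Fin N, (pdxV A x t i * B x t i + A x t i * pdxV B x t i))
      = ip (pdxV A) B x t + ip A (pdxV B) x t := Finset.sum_add_distrib
  exact e ▸ h

theorem hasDerivT_ip {N : ℕ} {A B : ℝ → ℝ → Fin N → ℝ}
    (hA : smooth2V A) (hB : smooth2V B) (x t : ℝ) :
    HasDerivAt (fun s => ip A B x s) (ip (pdtV A) B x t + ip A (pdtV B) x t) t := by
  have h : HasDerivAt (fun s => ∑ i : Fin N, A x s i * B x s i)
      (∑ i : Fin N, (pdtV A x t i * B x t i + A x t i * pdtV B x t i)) t :=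
    HasDerivAt.fun_sum fun i _ =>
      (smooth2_hasDerivT (f := fun a b => A a b i) (hA i) x t).mul
        (smooth2_hasDerivT (f := fun a b => B a b i) (hB i) x t)
  have e : (∑ i : Fin N, (pdtV A x t i * B x t i + A x t i * pdtV B x t i))
      = ip (pdtV A) B x t + ip A (pdtV B) x t := Finset.sum_add_distrib
  exact e ▸ h

theorem sum_sub_sq {N : ℕ} (f g : Fin N → ℝ) (c : ℝ) :
    ∑ i, (f i - c * g i) * (f i - c * g i)
      = (∑ i, f i * f i) - 2 * c * (∑ i, g i * f i) + c ^ 2 * (∑ i, g i * g i) := by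
  simp only [Finset.mul_sum, ← Finset.sum_sub_distrib, ← Finset.sum_add_distrib]
  exact Finset.sum_congr rfl fun i _ => by ring

theorem sum_expand {N : ℕ} (f g h k : Fin N → ℝ) (b c d : ℝ) :
    ∑ i, f i * (g i - b * h i - c * k i + d * k i)
      = (∑ i, f i * g i) - b * (∑ i, f i * h i) - c * (∑ i, f i * k i)
        + d * (∑ i, f i * k i) := by
  simp only [Finset.mul_sum, ← Finset.sum_sub_distrib, ← Finset.sum_add_distrib]
  exact Finset.sum_congr rfl fun i _ => by ring

/-- the Miura transformation maps the Jordan mKdV system to the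
    Jordan KdV system. -/
theorem stmt_9 {N : ℕ} (hN : 1 ≤ N) (u : ℝ → ℝ → ℝ) (U : ℝ → ℝ → Fin N → ℝ)
    (hu : smooth2 u) (hU : smooth2V U)
    (heq1 : ∀ x t, pdt u x t = pdx (pdx (pdx u)) x t
      - 6 * (u x t) ^ 2 * pdx u x t + 6 * pdx u x t * ip U U x t
      + 12 * u x t * ip U (pdxV U) x t)
    (heq2 : ∀ x t i, pdtV U x t i = pdxV (pdxV (pdxV U)) x t i
      - 12 * u x t * pdx u x t * U x t i - 6 * (u x t) ^ 2 * pdxV U x t i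
      + 6 * ip U U x t * pdxV U x t i)
    (w : ℝ → ℝ → ℝ) (W : ℝ → ℝ → Fin N → ℝ)
    (hw : ∀ x t, w x t = pdx u x t - (u x t) ^ 2 + ip U U x t)
    (hW : ∀ x t i, W x t i = pdxV U x t i - 2 * u x t * U x t i) :
    (∀ x t, pdt w x t = pdx (pdx (pdx w)) x t
      + 3 * pdx (fun x t => (w x t) ^ 2 - ip W W x t) x t) ∧
    (∀ x t i, pdtV W x t i = pdxV (pdxV (pdxV W)) x t i
      + 6 * pdxV (fun x t i => w x t * W x t i) x t i) := by
  -- smoothness of iterated derivatives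
  have hu1 : smooth2 (pdx u) := smooth2_pdx hu
  have hu2 : smooth2 (pdx (pdx u)) := smooth2_pdx hu1
  have hu3 : smooth2 (pdx (pdx (pdx u))) := smooth2_pdx hu2
  have hQ1 : smooth2V (pdxV U) := fun i => smooth2_pdx (f := fun a b => U a b i) (hU i)
  have hQ2 : smooth2V (pdxV (pdxV U)) := fun i =>
    smooth2_pdx (f := fun a b => pdxV U a b i) (hQ1 i)
  have hQ3 : smooth2V (pdxV (pdxV (pdxV U))) := fun i =>
    smooth2_pdx (f := fun a b => pdxV (pdxV U) a b i) (hQ2 i)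
  -- pointwise slice derivatives for vector components
  have hXU : ∀ (a b : ℝ) (j : Fin N), HasDerivAt (fun y => U y b j) (pdxV U a b j) a :=
    fun a b j => smooth2_hasDerivX (f := fun x t => U x t j) (hU j) a b
  have hXQ1 : ∀ (a b : ℝ) (j : Fin N),
      HasDerivAt (fun y => pdxV U y b j) (pdxV (pdxV U) a b j) a :=
    fun a b j => smooth2_hasDerivX (f := fun x t => pdxV U x t j) (hQ1 j) a b
  have hXQ2 : ∀ (a b : ℝ) (j : Fin N),
      HasDerivAt (fun y => pdxV (pdxV U) y b j) (pdxV (pdxV (pdxV U)) a b j) a :=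
    fun a b j => smooth2_hasDerivX (f := fun x t => pdxV (pdxV U) x t j) (hQ2 j) a b
  have hXQ3 : ∀ (a b : ℝ) (j : Fin N),
      HasDerivAt (fun y => pdxV (pdxV (pdxV U)) y b j) (pdxV (pdxV (pdxV (pdxV U))) a b j) a :=
    fun a b j => smooth2_hasDerivX (f := fun x t => pdxV (pdxV (pdxV U)) x t j) (hQ3 j) a b
  have hTU : ∀ (a b : ℝ) (j : Fin N), HasDerivAt (fun s => U a s j) (pdtV U a b j) b :=
    fun a b j => smooth2_hasDerivT (f := fun x t => U x t j) (hU j) a b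
  have hTQ1 : ∀ (a b : ℝ) (j : Fin N),
      HasDerivAt (fun s => pdxV U a s j) (pdtV (pdxV U) a b j) b :=
    fun a b j => smooth2_hasDerivT (f := fun x t => pdxV U x t j) (hQ1 j) a b
  -- the time equations as function-level rewrites
  have hut : pdt u = fun x t => pdx (pdx (pdx u)) x t
      - 6 * u x t ^ 2 * pdx u x t + 6 * pdx u x t * ip U U x t
      + 12 * u x t * ip U (pdxV U) x t := funext fun x => funext fun t => heq1 x t
  -- ip with the time-derivative of U, rewritten via the evolution equation
  have hipUt : ∀ x t, ip U (pdtV U) x t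
      = ip U (pdxV (pdxV (pdxV U))) x t - 12 * u x t * pdx u x t * ip U U x t
        - 6 * u x t ^ 2 * ip U (pdxV U) x t + 6 * ip U U x t * ip U (pdxV U) x t := by
    intro x t
    have h1 : ip U (pdtV U) x t = ∑ i, U x t i * (pdxV (pdxV (pdxV U)) x t i
        - 12 * u x t * pdx u x t * U x t i - 6 * u x t ^ 2 * pdxV U x t i
        + 6 * ip U U x t * pdxV U x t i) :=
      Finset.sum_congr rfl fun i _ => by rw [heq2]
    rw [h1]
    exact sum_expand _ _ _ _ _ _ _
  -- x-derivative of the right-hand side of the scalar evolution equation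
  have hpdxut : ∀ x t, pdx (fun x t => pdx (pdx (pdx u)) x t
      - 6 * u x t ^ 2 * pdx u x t + 6 * pdx u x t * ip U U x t
      + 12 * u x t * ip U (pdxV U) x t) x t
      = - 6 * (u x t) * (u x t) * (pdx (pdx u) x t)
        - 12 * (u x t) * (pdx u x t) * (pdx u x t)
        + 12 * (u x t) * (ip U (pdxV (pdxV U)) x t)
        + 12 * (u x t) * (ip (pdxV U) (pdxV U) x t)
        + 24 * (pdx u x t) * (ip U (pdxV U) x t)
        + 6 * (pdx (pdx u) x t) * (ip U U x t)
        + (pdx (pdx (pdx (pdx u))) x t) := by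
    intro x t
    have h := (((smooth2_hasDerivX hu3 x t).sub
        ((((smooth2_hasDerivX hu x t).pow 2).const_mul 6).mul (smooth2_hasDerivX hu1 x t))).add
        (((smooth2_hasDerivX hu1 x t).const_mul 6).mul (hasDerivX_ip hU hU x t))).add
        (((smooth2_hasDerivX hu x t).const_mul 12).mul (hasDerivX_ip hU hQ1 x t))
    refine h.deriv.trans ?_
    rw [ip_comm (pdxV U) U]
    norm_num
    ring

  have hw' : w = fun x t => pdx u x t - (u x t) ^ 2 + ip U U x t :=
    funext fun x => funext fun t => hw x t
  have hW' : W = fun x t i => pdxV U x t i - 2 * u x t * U x t i :=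
    funext fun x => funext fun t => funext fun i => hW x t i
  -- first x-derivative of w
  have hE1 : pdx (fun x t => pdx u x t - u x t ^ 2 + ip U U x t)
      = fun x t => pdx (pdx u) x t - 2 * (u x t * pdx u x t) + 2 * ip U (pdxV U) x t := by
    funext a b
    have h := ((smooth2_hasDerivX hu1 a b).sub ((smooth2_hasDerivX hu a b).pow 2)).add
        (hasDerivX_ip hU hU a b)
    refine h.deriv.trans ?_
    rw [ip_comm (pdxV U) U]
    norm_num; ring
  -- second x-derivative of w
  have hE2 : pdx (fun x t => pdx (pdx u) x t - 2 * (u x t * pdx u x t) + 2 * ip U (pdxV U) x t)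
      = fun x t => pdx (pdx (pdx u)) x t - 2 * (pdx u x t * pdx u x t)
          - 2 * (u x t * pdx (pdx u) x t) + 2 * ip (pdxV U) (pdxV U) x t
          + 2 * ip U (pdxV (pdxV U)) x t := by
    funext a b
    have h := (((smooth2_hasDerivX hu2 a b).sub
        (((smooth2_hasDerivX hu a b).mul (smooth2_hasDerivX hu1 a b)).const_mul 2)).add
        ((hasDerivX_ip hU hQ1 a b).const_mul 2))
    refine h.deriv.trans ?_
    ring
  -- third x-derivative of w (pointwise)
  have hE3 : ∀ x t, pdx (fun x t => pdx (pdx (pdx u)) x t - 2 * (pdx u x t * pdx u x t)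
      - 2 * (u x t * pdx (pdx u) x t) + 2 * ip (pdxV U) (pdxV U) x t
      + 2 * ip U (pdxV (pdxV U)) x t) x t
      = - 2 * (u x t) * (pdx (pdx (pdx u)) x t) - 6 * (pdx u x t) * (pdx (pdx u) x t)
        + (pdx (pdx (pdx (pdx u))) x t) + 2 * (ip U (pdxV (pdxV (pdxV U))) x t)
        + 6 * (ip (pdxV U) (pdxV (pdxV U)) x t) := by
    intro x t
    have h := ((((smooth2_hasDerivX hu3 x t).sub
        (((smooth2_hasDerivX hu1 x t).mul (smooth2_hasDerivX hu1 x t)).const_mul 2)).sub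
        (((smooth2_hasDerivX hu x t).mul (smooth2_hasDerivX hu2 x t)).const_mul 2)).add
        ((hasDerivX_ip hQ1 hQ1 x t).const_mul 2)).add
        ((hasDerivX_ip hU hQ2 x t).const_mul 2)
    refine h.deriv.trans ?_
    rw [ip_comm (pdxV (pdxV U)) (pdxV U)]
    ring
  -- the inner product of W with itself
  have hWW : ip (fun x t i => pdxV U x t i - 2 * u x t * U x t i)
      (fun x t i => pdxV U x t i - 2 * u x t * U x t i)
      = fun x t => ip (pdxV U) (pdxV U) x t - 2 * (2 * u x t) * ip U (pdxV U) x t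
          + (2 * u x t) ^ 2 * ip U U x t := by
    funext a b
    exact sum_sub_sq _ _ _
  -- derivative of w^2 - <W,W> (pointwise)
  have hG : ∀ x t, pdx (fun x t => (pdx u x t - u x t ^ 2 + ip U U x t) ^ 2
      - ip (fun x t i => pdxV U x t i - 2 * u x t * U x t i)
          (fun x t i => pdxV U x t i - 2 * u x t * U x t i) x t) x t
      = 4 * (u x t) * (u x t) * (u x t) * (pdx u x t)
        - 2 * (u x t) * (u x t) * (pdx (pdx u) x t)
        - 12 * (u x t) * (u x t) * (ip U (pdxV U) x t)
        - 4 * (u x t) * (pdx u x t) * (pdx u x t)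
        - 12 * (u x t) * (pdx u x t) * (ip U U x t)
        + 4 * (u x t) * (ip U (pdxV (pdxV U)) x t)
        + 4 * (u x t) * (ip (pdxV U) (pdxV U) x t)
        + 2 * (pdx u x t) * (pdx (pdx u) x t)
        + 8 * (pdx u x t) * (ip U (pdxV U) x t)
        + 2 * (pdx (pdx u) x t) * (ip U U x t)
        + 4 * (ip U U x t) * (ip U (pdxV U) x t)
        - 2 * (ip (pdxV U) (pdxV (pdxV U)) x t) := by
    intro x t
    have hfun : (fun x t => (pdx u x t - u x t ^ 2 + ip U U x t) ^ 2
        - ip (fun x t i => pdxV U x t i - 2 * u x t * U x t i)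
            (fun x t i => pdxV U x t i - 2 * u x t * U x t i) x t)
        = fun x t => (pdx u x t - u x t ^ 2 + ip U U x t) ^ 2
            - (ip (pdxV U) (pdxV U) x t - 2 * (2 * u x t) * ip U (pdxV U) x t
              + (2 * u x t) ^ 2 * ip U U x t) := by
      funext a b
      rw [hWW]
    rw [hfun]
    have hE := ((smooth2_hasDerivX hu1 x t).sub ((smooth2_hasDerivX hu x t).pow 2)).add
        (hasDerivX_ip hU hU x t)
    have h := (hE.pow 2).sub (((hasDerivX_ip hQ1 hQ1 x t).sub
        ((((smooth2_hasDerivX hu x t).const_mul 2).const_mul 2).mul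
          (hasDerivX_ip hU hQ1 x t))).add
        ((((smooth2_hasDerivX hu x t).const_mul 2).pow 2).mul (hasDerivX_ip hU hU x t)))
    refine h.deriv.trans ?_
    rw [ip_comm (pdxV U) U, ip_comm (pdxV (pdxV U)) (pdxV U)]
    norm_num; ring
  -- the time derivative of w (pointwise)
  have hL : ∀ x t, pdt (fun x t => pdx u x t - u x t ^ 2 + ip U U x t) x t
      = 12 * (u x t) * (u x t) * (u x t) * (pdx u x t)
        - 6 * (u x t) * (u x t) * (pdx (pdx u) x t)
        - 36 * (u x t) * (u x t) * (ip U (pdxV U) x t)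
        - 12 * (u x t) * (pdx u x t) * (pdx u x t)
        - 36 * (u x t) * (pdx u x t) * (ip U U x t)
        - 2 * (u x t) * (pdx (pdx (pdx u)) x t)
        + 12 * (u x t) * (ip U (pdxV (pdxV U)) x t)
        + 12 * (u x t) * (ip (pdxV U) (pdxV U) x t)
        + 24 * (pdx u x t) * (ip U (pdxV U) x t)
        + 6 * (pdx (pdx u) x t) * (ip U U x t)
        + (pdx (pdx (pdx (pdx u))) x t)
        + 12 * (ip U U x t) * (ip U (pdxV U) x t)
        + 2 * (ip U (pdxV (pdxV (pdxV U))) x t) := by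
    intro x t
    have h := ((smooth2_hasDerivT hu1 x t).sub ((smooth2_hasDerivT hu x t).pow 2)).add
        (hasDerivT_ip hU hU x t)
    refine h.deriv.trans ?_
    rw [clairaut hu x t]
    simp only [hut]
    rw [hpdxut x t, ip_comm (pdtV U) U, hipUt x t]
    norm_num; ring
  constructor
  · -- scalar equation
    intro x t
    simp only [hw', hW']
    rw [hL x t, hE1, hE2, hE3 x t, hG x t]
    ring
  · -- vector equation
    intro x t i
    simp only [hw', hW']
    have hUti : (fun a b => pdtV U a b i) = fun a b =>
        pdxV (pdxV (pdxV U)) a b i - 12 * u a b * pdx u a b * U a b i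
        - 6 * u a b ^ 2 * pdxV U a b i + 6 * ip U U a b * pdxV U a b i :=
      funext fun a => funext fun b => heq2 a b i
    have hq3xi : pdx (fun a b => pdxV (pdxV (pdxV U)) a b i - 12 * u a b * pdx u a b * U a b i
        - 6 * u a b ^ 2 * pdxV U a b i + 6 * ip U U a b * pdxV U a b i) x t
        = - 6 * (u x t) * (u x t) * (pdxV (pdxV U) x t i)
          - 24 * (u x t) * (pdx u x t) * (pdxV U x t i)
          - 12 * (u x t) * (pdx (pdx u) x t) * (U x t i)
          - 12 * (pdx u x t) * (pdx u x t) * (U x t i)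
          + 6 * (ip U U x t) * (pdxV (pdxV U) x t i)
          + 12 * (ip U (pdxV U) x t) * (pdxV U x t i)
          + (pdxV (pdxV (pdxV (pdxV U))) x t i) := by
      have h := (((hXQ3 x t i).sub
          ((((smooth2_hasDerivX hu x t).const_mul 12).mul
            (smooth2_hasDerivX hu1 x t)).mul (hXU x t i))).sub
          ((((smooth2_hasDerivX hu x t).pow 2).const_mul 6).mul (hXQ1 x t i))).add
          (((hasDerivX_ip hU hU x t).const_mul 6).mul (hXQ1 x t i))
      refine h.deriv.trans ?_
      rw [ip_comm (pdxV U) U]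
      norm_num; ring
    have hBL : pdtV (fun x t i => pdxV U x t i - 2 * u x t * U x t i) x t i
        = 12 * (u x t) * (u x t) * (u x t) * (pdxV U x t i)
          + 36 * (u x t) * (u x t) * (pdx u x t) * (U x t i)
          - 6 * (u x t) * (u x t) * (pdxV (pdxV U) x t i)
          - 24 * (u x t) * (pdx u x t) * (pdxV U x t i)
          - 12 * (u x t) * (pdx (pdx u) x t) * (U x t i)
          - 12 * (u x t) * (ip U U x t) * (pdxV U x t i)
          - 24 * (u x t) * (ip U (pdxV U) x t) * (U x t i)
          - 2 * (u x t) * (pdxV (pdxV (pdxV U)) x t i)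
          - 12 * (pdx u x t) * (pdx u x t) * (U x t i)
          - 12 * (pdx u x t) * (ip U U x t) * (U x t i)
          - 2 * (pdx (pdx (pdx u)) x t) * (U x t i)
          + 6 * (ip U U x t) * (pdxV (pdxV U) x t i)
          + 12 * (ip U (pdxV U) x t) * (pdxV U x t i)
          + (pdxV (pdxV (pdxV (pdxV U))) x t i) := by
      have h := (hTQ1 x t i).sub
          (((smooth2_hasDerivT hu x t).const_mul 2).mul (hTU x t i))
      refine h.deriv.trans ?_
      have e1 : pdtV (pdxV U) x t i = pdx (fun a b => pdtV U a b i) x t :=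
        clairaut (f := fun a b => U a b i) (hU i) x t
      rw [e1, hUti, hq3xi, heq1 x t, heq2 x t i]
      norm_num; ring
    have hF1 : pdxV (fun x t i => pdxV U x t i - 2 * u x t * U x t i)
        = fun x t i => pdxV (pdxV U) x t i - 2 * (pdx u x t * U x t i)
            - 2 * (u x t * pdxV U x t i) := by
      funext a b j
      have h := (hXQ1 a b j).sub
          (((smooth2_hasDerivX hu a b).const_mul 2).mul (hXU a b j))
      refine h.deriv.trans ?_
      ring
    have hF2 : pdxV (fun x t i => pdxV (pdxV U) x t i - 2 * (pdx u x t * U x t i)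
        - 2 * (u x t * pdxV U x t i))
        = fun x t i => pdxV (pdxV (pdxV U)) x t i - 2 * (pdx (pdx u) x t * U x t i)
            - 4 * (pdx u x t * pdxV U x t i) - 2 * (u x t * pdxV (pdxV U) x t i) := by
      funext a b j
      have h := ((hXQ2 a b j).sub
          (((smooth2_hasDerivX hu1 a b).mul (hXU a b j)).const_mul 2)).sub
          (((smooth2_hasDerivX hu a b).mul (hXQ1 a b j)).const_mul 2)
      refine h.deriv.trans ?_
      ring
    have hF3 : pdxV (fun x t i => pdxV (pdxV (pdxV U)) x t i - 2 * (pdx (pdx u) x t * U x t i)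
        - 4 * (pdx u x t * pdxV U x t i) - 2 * (u x t * pdxV (pdxV U) x t i)) x t i
        = - 2 * (u x t) * (pdxV (pdxV (pdxV U)) x t i)
          - 6 * (pdx u x t) * (pdxV (pdxV U) x t i)
          - 6 * (pdx (pdx u) x t) * (pdxV U x t i)
          - 2 * (pdx (pdx (pdx u)) x t) * (U x t i)
          + (pdxV (pdxV (pdxV (pdxV U))) x t i) := by
      have h := (((hXQ3 x t i).sub
          (((smooth2_hasDerivX hu2 x t).mul (hXU x t i)).const_mul 2)).sub
          (((smooth2_hasDerivX hu1 x t).mul (hXQ1 x t i)).const_mul 4)).sub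
          (((smooth2_hasDerivX hu x t).mul (hXQ2 x t i)).const_mul 2)
      refine h.deriv.trans ?_
      ring
    have hBR2 : pdxV (fun x t i => (pdx u x t - u x t ^ 2 + ip U U x t)
        * (pdxV U x t i - 2 * u x t * U x t i)) x t i
        = 2 * (u x t) * (u x t) * (u x t) * (pdxV U x t i)
          + 6 * (u x t) * (u x t) * (pdx u x t) * (U x t i)
          - (u x t) * (u x t) * (pdxV (pdxV U) x t i)
          - 4 * (u x t) * (pdx u x t) * (pdxV U x t i)
          - 2 * (u x t) * (pdx (pdx u) x t) * (U x t i)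
          - 2 * (u x t) * (ip U U x t) * (pdxV U x t i)
          - 4 * (u x t) * (ip U (pdxV U) x t) * (U x t i)
          - 2 * (pdx u x t) * (pdx u x t) * (U x t i)
          - 2 * (pdx u x t) * (ip U U x t) * (U x t i)
          + (pdx u x t) * (pdxV (pdxV U) x t i)
          + (pdx (pdx u) x t) * (pdxV U x t i)
          + (ip U U x t) * (pdxV (pdxV U) x t i)
          + 2 * (ip U (pdxV U) x t) * (pdxV U x t i) := by
      have hE := ((smooth2_hasDerivX hu1 x t).sub
          ((smooth2_hasDerivX hu x t).pow 2)).add (hasDerivX_ip hU hU x t)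
      have h := hE.mul ((hXQ1 x t i).sub
          (((smooth2_hasDerivX hu x t).const_mul 2).mul (hXU x t i)))
      refine h.deriv.trans ?_
      rw [ip_comm (pdxV U) U]
      norm_num; ring
    rw [hBL, hF1, hF2, hF3, hBR2]
    ring
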